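/- In the Burning Algorithm on the auxiliary graph G_{A,C}, the configuration η(h) (equal to h on A, 0 on C, and 1 on the attached path vertices) is recurrent or not independently of the path lengths m_y: whether η(h) ∈ R_{G_{A,C}} does not depend on the choice of m_y ≥ 1 for y ∈ (∂A)\C. -/

import Mathlib

noncomputable section

open scoped Classical

/-- Unburnt sets of the Burning Algorithm on a graph `H` with sink `sink`:
`U 0` is everything except the sink and
`U (n+1) = {w ∈ U n : η w < deg_{U n} w}`. -/
def burnU {W : Type*} (H : SimpleGraph W) (sink : W) (η : W → ℕ) : ℕ → Set W
  | 0 => {w | w ≠ sink}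
  | n + 1 => {w ∈ burnU H sink η n |
      η w < (H.neighborSet w ∩ burnU H sink η n).ncard}

/-- The Burning Algorithm terminates (everything burns), i.e. the configuration is
recurrent (= allowed). -/
def BurningTerminates {W : Type*} (H : SimpleGraph W) (sink : W) (η : W → ℕ) : Prop :=
  ∃ i : ℕ, burnU H sink η i = ∅

/-- The outer vertex boundary of `A`. -/
def outerBd {V : Type*} (G : SimpleGraph V) (A : Set V) : Set V :=
  {v : V | v ∉ A ∧ ∃ a ∈ A, G.Adj v a}

/-- Vertex set of the auxiliary graph `G_{A,C}`: the vertices of `A ∪ ∂A`, the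
internal vertices of the glued paths (for `y ∈ ∂A \ C`, a path of length `m y` has
`m y − 1` internal vertices), and the sink. -/
abbrev AuxV {V : Type*} (G : SimpleGraph V) (A C : Set V)
    (m : ↥(outerBd G A \ C) → ℕ) : Type _ :=
  ↥(A ∪ outerBd G A) ⊕ (((y : ↥(outerBd G A \ C)) × Fin (m y - 1)) ⊕ Unit)

/-- Adjacency generating relation of `G_{A,C}`: the subgraph of `G` induced by
`A ∪ ∂A`, together with, for each `y ∈ ∂A \ C`, a glued path
`y, p_0, …, p_{m y − 2}, s` of length `m y` (a direct edge `y – s` when `m y = 1`). -/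
def auxRel {V : Type*} (G : SimpleGraph V) (A C : Set V)
    (m : ↥(outerBd G A \ C) → ℕ) :
    AuxV G A C m → AuxV G A C m → Prop := fun u v =>
  match u, v with
  | Sum.inl a, Sum.inl b => G.Adj a.val b.val
  | Sum.inl a, Sum.inr (Sum.inl p) => a.val = p.1.val ∧ (p.2 : ℕ) = 0
  | Sum.inl a, Sum.inr (Sum.inr _) =>
      ∃ h : a.val ∈ outerBd G A \ C, m ⟨a.val, h⟩ = 1
  | Sum.inr (Sum.inl p), Sum.inr (Sum.inl q) =>
      p.1 = q.1 ∧ (p.2 : ℕ) + 1 = (q.2 : ℕ)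
  | Sum.inr (Sum.inl p), Sum.inr (Sum.inr _) => (p.2 : ℕ) + 2 = m p.1
  | _, _ => False

/-- The auxiliary graph `G_{A,C}`. -/
def auxGraph {V : Type*} (G : SimpleGraph V) (A C : Set V)
    (m : ↥(outerBd G A \ C) → ℕ) : SimpleGraph (AuxV G A C m) :=
  SimpleGraph.fromRel (auxRel G A C m)

/-- The configuration `η(h)`: equal to `h` on `A`, to `0` on `C`, and to `1` on the
remaining boundary vertices and on the internal path vertices. -/
def auxConfig {V : Type*} (G : SimpleGraph V) (A C : Set V)
    (m : ↥(outerBd G A \ C) → ℕ) (h : ↥A → ℕ) : AuxV G A C m → ℕ := fun w =>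
  match w with
  | Sum.inl a => if ha : a.val ∈ A then h ⟨a.val, ha⟩
      else if a.val ∈ C then 0 else 1
  | Sum.inr (Sum.inl _) => 1
  | Sum.inr (Sum.inr _) => 0


/-!
By Dhar's burning criterion a configuration on a finite graph is recurrent iff it admits no
forbidden subconfiguration: a nonempty set `F` of non-sink vertices, each of which carries
fewer grains than it has neighbours in `F`. An internal vertex of a glued path carries one grain
and has at most one neighbour other than its successor towards the sink, so it can lie in `F`
only if its successor does; as the last path vertex is adjacent to the sink, no path vertex
lies in `F`. Forbidden subconfigurations therefore live on `A ∪ ∂A`, where neither the graph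
nor the configuration depends on the path lengths.
-/

section Burning

variable {W : Type*} (H : SimpleGraph W) (s : W) (η : W → ℕ)

/-- `F` carries a forbidden subconfiguration of `η`; nonemptiness and avoiding the sink are
required separately. -/
def IsForbiddenSet (F : Set W) : Prop :=
  ∀ w ∈ F, η w < (H.neighborSet w ∩ F).ncard

lemma burnU_antitone : Antitone (burnU H s η) :=
  antitone_nat_of_succ_le fun _ _ hw => hw.1

lemma sink_notMem_burnU (n : ℕ) : s ∉ burnU H s η n :=
  fun hs => burnU_antitone H s η (Nat.zero_le n) hs rfl

lemma subset_burnU_of_isForbiddenSet [Finite W] {F : Set W} (hs : s ∉ F)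
    (hF : IsForbiddenSet H η F) (n : ℕ) : F ⊆ burnU H s η n := by
  induction n with
  | zero => exact fun w hw hws => hs (hws ▸ hw)
  | succ n ih =>
    exact fun w hw =>
      ⟨ih hw, (hF w hw).trans_le (Set.ncard_le_ncard (Set.inter_subset_inter_right _ ih))⟩

lemma isForbiddenSet_burnU_of_succ_eq {n : ℕ} (h : burnU H s η (n + 1) = burnU H s η n) :
    IsForbiddenSet H η (burnU H s η n) :=
  fun _ hw => (h ▸ hw : _ ∈ burnU H s η (n + 1)).2

theorem burningTerminates_iff_not_exists_isForbiddenSet [Finite W] :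
    BurningTerminates H s η ↔ ¬ ∃ F : Set W, F.Nonempty ∧ s ∉ F ∧ IsForbiddenSet H η F := by
  constructor
  · rintro ⟨n, hn⟩ ⟨F, ⟨w, hw⟩, hs, hF⟩
    simpa [hn] using subset_burnU_of_isForbiddenSet H s η hs hF n hw
  · intro hno
    obtain ⟨n, hn⟩ := WellFoundedLT.antitone_chain_condition (burnU_antitone H s η)
    refine ⟨n, Set.not_nonempty_iff_eq_empty.mp fun hne => hno ⟨_, hne,
      sink_notMem_burnU H s η n, isForbiddenSet_burnU_of_succ_eq H s η (hn _ n.le_succ).symm⟩⟩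

lemma isForbiddenSet_image_iff {W' : Type*} {H' : SimpleGraph W'} (f : H' ↪g H) (S : Set W') :
    IsForbiddenSet H η (f '' S) ↔ IsForbiddenSet H' (η ∘ f) S := by
  have hnbr : ∀ w, H.neighborSet (f w) ∩ f '' S = f '' (H'.neighborSet w ∩ S) := by
    intro w
    ext v
    constructor
    · rintro ⟨hadj, u, hu, rfl⟩
      exact ⟨u, ⟨f.map_adj_iff.mp hadj, hu⟩, rfl⟩
    · rintro ⟨u, ⟨hadj, hu⟩, rfl⟩
      exact ⟨f.map_adj_iff.mpr hadj, u, hu, rfl⟩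
  simp only [IsForbiddenSet, Set.forall_mem_image, hnbr,
    Set.ncard_image_of_injective _ f.injective, Function.comp_apply]

end Burning

lemma outerBd_finite {V : Type*} (G : SimpleGraph V) {A : Set V} (hA : A.Finite)
    (hG : ∀ v, (G.neighborSet v).Finite) : (outerBd G A).Finite :=
  (hA.biUnion fun a _ => hG a).subset fun _ ⟨_, _, ha, hadj⟩ => Set.mem_biUnion ha hadj.symm

section AuxGraph

variable {V : Type*} (G : SimpleGraph V) (A C : Set V) (m : ↥(outerBd G A \ C) → ℕ)

def auxCoreEmbedding : G.induce (A ∪ outerBd G A) ↪g auxGraph G A C m where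
  toFun := Sum.inl
  inj' := Sum.inl_injective
  map_rel_iff' {a b} := by
    change (SimpleGraph.fromRel _).Adj _ _ ↔ G.Adj a b
    rw [SimpleGraph.fromRel_adj]
    exact ⟨fun ⟨_, hab⟩ => hab.elim id (G.adj_symm ·), fun hab =>
      ⟨Sum.inl_injective.ne (G.ne_of_adj hab ∘ congrArg Subtype.val), Or.inl hab⟩⟩

lemma auxGraph_adj_path {y : ↥(outerBd G A \ C)} {k : Fin (m y - 1)} {w : AuxV G A C m}
    (hadj : (auxGraph G A C m).Adj (.inr (.inl ⟨y, k⟩)) w) :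
    (∃ a : ↥(A ∪ outerBd G A), w = .inl a ∧ a.val = y.val ∧ (k : ℕ) = 0) ∨
      (∃ k' : Fin (m y - 1), w = .inr (.inl ⟨y, k'⟩) ∧ ((k' : ℕ) + 1 = k ∨ (k' : ℕ) = k + 1)) ∨
      (w = .inr (.inr ()) ∧ (k : ℕ) + 2 = m y) := by
  rw [auxGraph, SimpleGraph.fromRel_adj] at hadj
  obtain ⟨-, hr | hr⟩ := hadj <;> rcases w with a | ⟨y', k'⟩ | ⟨⟨⟩⟩
  · exact hr.elim
  · obtain ⟨rfl, hk⟩ := hr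
    exact .inr (.inl ⟨k', rfl, .inr hk.symm⟩)
  · exact .inr (.inr ⟨rfl, hr⟩)
  · exact .inl ⟨a, rfl, hr⟩
  · obtain ⟨rfl, hk⟩ := hr
    exact .inr (.inl ⟨k', rfl, .inl hk⟩)
  · exact hr.elim

lemma exists_path_succ_mem_of_isForbiddenSet (h : ↥A → ℕ) {F : Set (AuxV G A C m)}
    (hs : .inr (.inr ()) ∉ F) (hF : IsForbiddenSet (auxGraph G A C m) (auxConfig G A C m h) F)
    {y : ↥(outerBd G A \ C)} {k : Fin (m y - 1)} (hk : .inr (.inl ⟨y, k⟩) ∈ F) :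
    ∃ k' : Fin (m y - 1), (k' : ℕ) = k + 1 ∧ .inr (.inl ⟨y, k'⟩) ∈ F := by
  by_contra! hnext
  have hback : ∀ w ∈ (auxGraph G A C m).neighborSet (.inr (.inl ⟨y, k⟩)) ∩ F,
      (∃ a : ↥(A ∪ outerBd G A), w = .inl a ∧ a.val = y.val ∧ (k : ℕ) = 0) ∨
        ∃ k' : Fin (m y - 1), w = .inr (.inl ⟨y, k'⟩) ∧ (k' : ℕ) + 1 = k := by
    rintro w ⟨hadj, hw⟩
    rcases auxGraph_adj_path G A C m hadj with hinl | ⟨k', rfl, hk' | hk'⟩ | ⟨rfl, -⟩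
    · exact .inl hinl
    · exact .inr ⟨k', rfl, hk'⟩
    · exact absurd hw (hnext k' hk')
    · exact absurd hw hs
  have hsub : ((auxGraph G A C m).neighborSet (.inr (.inl ⟨y, k⟩)) ∩ F).Subsingleton := by
    intro w₁ hw₁ w₂ hw₂
    rcases hback w₁ hw₁ with ⟨a₁, rfl, ha₁, hk₁⟩ | ⟨k₁, rfl, hk₁⟩ <;>
      rcases hback w₂ hw₂ with ⟨a₂, rfl, ha₂, hk₂⟩ | ⟨k₂, rfl, hk₂⟩
    · exact congrArg Sum.inl (Subtype.ext (ha₁.trans ha₂.symm))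
    · omega
    · omega
    · obtain rfl : k₁ = k₂ := Fin.ext (by omega)
      rfl
  have hgrain : 1 < ((auxGraph G A C m).neighborSet (.inr (.inl ⟨y, k⟩)) ∩ F).ncard := hF _ hk
  have hle := Set.ncard_le_one hsub.finite |>.mpr hsub
  omega

lemma path_notMem_of_isForbiddenSet (h : ↥A → ℕ) {F : Set (AuxV G A C m)}
    (hs : .inr (.inr ()) ∉ F) (hF : IsForbiddenSet (auxGraph G A C m) (auxConfig G A C m h) F)
    (y : ↥(outerBd G A \ C)) (k : Fin (m y - 1)) : .inr (.inl ⟨y, k⟩) ∉ F := by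
  suffices ∀ t (k : Fin (m y - 1)), (k : ℕ) + 2 + t = m y → .inr (.inl ⟨y, k⟩) ∉ F from
    this (m y - 2 - k) k (by have := k.isLt; omega)
  intro t
  induction t with
  | zero =>
    intro k hk hkF
    obtain ⟨k', hk', -⟩ := exists_path_succ_mem_of_isForbiddenSet G A C m h hs hF hkF
    have := k'.isLt
    omega
  | succ t ih =>
    intro k hk hkF
    obtain ⟨k', hk', hk'F⟩ := exists_path_succ_mem_of_isForbiddenSet G A C m h hs hF hkF
    exact ih k' (by omega) hk'F

lemma exists_isForbiddenSet_auxGraph_iff (h : ↥A → ℕ) :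
    (∃ F : Set (AuxV G A C m), F.Nonempty ∧ .inr (.inr ()) ∉ F ∧
        IsForbiddenSet (auxGraph G A C m) (auxConfig G A C m h) F) ↔
      ∃ S : Set ↥(A ∪ outerBd G A), S.Nonempty ∧
        IsForbiddenSet (G.induce (A ∪ outerBd G A)) (auxConfig G A C m h ∘ Sum.inl) S := by
  constructor
  · rintro ⟨F, hne, hs, hF⟩
    have hcore : F ⊆ Set.range Sum.inl := by
      rintro (a | ⟨y, k⟩ | ⟨⟨⟩⟩) hw
      · exact ⟨a, rfl⟩
      · exact absurd hw (path_notMem_of_isForbiddenSet G A C m h hs hF y k)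
      · exact absurd hw hs
    rw [← Set.image_preimage_eq_of_subset hcore] at hne hF
    exact ⟨_, hne.of_image, (isForbiddenSet_image_iff _ _ (auxCoreEmbedding G A C m) _).mp hF⟩
  · rintro ⟨S, hne, hS⟩
    exact ⟨Sum.inl '' S, hne.image _, by simp,
      (isForbiddenSet_image_iff _ _ (auxCoreEmbedding G A C m) _).mpr hS⟩

end AuxGraph

theorem stmt_18_general {V : Type*} (G : SimpleGraph V) (d : ℕ) (hd : 3 ≤ d)
    (hreg : ∀ v : V, (G.neighborSet v).ncard = d)
    (A : Set V) (hA : A.Finite)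
    (C : Set V)
    (h : ↥A → ℕ)
    (m m' : ↥(outerBd G A \ C) → ℕ) :
    BurningTerminates (auxGraph G A C m) (Sum.inr (Sum.inr ()))
        (auxConfig G A C m h) ↔
      BurningTerminates (auxGraph G A C m') (Sum.inr (Sum.inr ()))
        (auxConfig G A C m' h) := by
  have hbd : (outerBd G A).Finite :=
    outerBd_finite G hA fun v => Set.finite_of_ncard_ne_zero (by rw [hreg v]; omega)
  have : Finite ↥(A ∪ outerBd G A) := (hA.union hbd).to_subtype
  have : Finite ↥(outerBd G A \ C) := hbd.sdiff.to_subtype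
  rw [burningTerminates_iff_not_exists_isForbiddenSet,
    burningTerminates_iff_not_exists_isForbiddenSet, exists_isForbiddenSet_auxGraph_iff,
    exists_isForbiddenSet_auxGraph_iff]
  -- `auxConfig G A C m h ∘ Sum.inl` does not depend on `m`
  rfl

/-- for the infinite `d`-regular tree `G` (`d ≥ 3`), a finite `A`,
`C ⊊ ∂A` and `h ∈ {0,…,d−1}^A`, whether the configuration `η(h)` on the auxiliary
graph `G_{A,C}` is recurrent (i.e. the Burning Algorithm terminates) does not depend
on the choice of the glued path lengths `m y ≥ 1`, `y ∈ ∂A \ C`. -/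
theorem stmt_18 {V : Type*} (G : SimpleGraph V) (d : ℕ) (hd : 3 ≤ d)
    (hreg : ∀ v : V, (G.neighborSet v).ncard = d)
    (hconn : G.Connected) (hacyc : G.IsAcyclic)
    (A : Set V) (hA : A.Finite)
    (C : Set V) (hC : C ⊆ outerBd G A) (hCne : C ≠ outerBd G A)
    (h : ↥A → ℕ) (hh : ∀ a : ↥A, h a < d)
    (m m' : ↥(outerBd G A \ C) → ℕ)
    (hm : ∀ y, 1 ≤ m y) (hm' : ∀ y, 1 ≤ m' y) :
    BurningTerminates (auxGraph G A C m) (Sum.inr (Sum.inr ()))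
        (auxConfig G A C m h) ↔
      BurningTerminates (auxGraph G A C m') (Sum.inr (Sum.inr ()))
        (auxConfig G A C m' h) :=
  stmt_18_general G d hd hreg A hA C h m m'
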